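/- Let ν>2 and set m = √(ν/(ν−2)). Then for every x∈ℝ, the function x ↦ m·φ_{ν−2}(x/m) is differentiable with derivative −x·φ_ν(x), where φ_ν denotes the standard Student-t density with ν degrees of freedom. Consequently, the function τ_ν(x) = x·Φ_ν(x) + m·φ_{ν−2}(x/m) is differentiable with τ_ν′(x) = Φ_ν(x) for all x∈ℝ, where Φ_ν is the cumulative distribution function of φ_ν; in particular τ_ν is nondecreasing. -/

import Mathlib

open MeasureTheory

/-- The standard Student-t density with `ν` degrees of freedom. -/
noncomputable def tpdf (ν x : ℝ) : ℝ :=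
  Real.Gamma ((ν + 1) / 2) / (Real.sqrt (ν * Real.pi) * Real.Gamma (ν / 2)) *
    (1 + x ^ 2 / ν) ^ (-((ν + 1) / 2))

/-- The cumulative distribution function of the standard Student-t distribution
with `ν` degrees of freedom. -/
noncomputable def tcdf (ν x : ℝ) : ℝ := ∫ t in Set.Iic x, tpdf ν t

/-- `τ_ν(x) = x·Φ_ν(x) + √(ν/(ν−2))·φ_{ν−2}(x/√(ν/(ν−2)))`. -/
noncomputable def tau (ν x : ℝ) : ℝ :=
  x * tcdf ν x +
    Real.sqrt (ν / (ν - 2)) * tpdf (ν - 2) (x / Real.sqrt (ν / (ν - 2)))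

/-!
Write `c_ν = tpdfConst ν` for the normalising constant of `φ_ν` and `m = √(ν/(ν−2))`.
Since `(x/m)²/(ν−2) = x²/ν`, the function `m·φ_{ν−2}(x/m)` is a multiple of
`(1 + x²/ν)^{−(ν−1)/2}`, and `Γ(s+1) = sΓ(s)` turns its constant into `ν/(ν−1)·c_ν`;
differentiating then gives exactly `−x·φ_ν(x)`. In `τ_ν' = Φ_ν + xφ_ν − xφ_ν` the last two
terms cancel, and `Φ_ν ≥ 0` gives monotonicity.
-/

open Real

noncomputable def tpdfConst (ν : ℝ) : ℝ :=
  Gamma ((ν + 1) / 2) / (√(ν * π) * Gamma (ν / 2))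

lemma tpdf_eq (ν x : ℝ) : tpdf ν x = tpdfConst ν * (1 + x ^ 2 / ν) ^ (-((ν + 1) / 2)) := rfl

section

variable {ν : ℝ}

lemma tpdfConst_pos (hν : 0 < ν) : 0 < tpdfConst ν := by
  have := Gamma_pos_of_pos (show 0 < (ν + 1) / 2 by positivity)
  have := Gamma_pos_of_pos (show 0 < ν / 2 by positivity)
  have : 0 < √(ν * π) := sqrt_pos.2 (by positivity)
  unfold tpdfConst
  positivity

lemma tpdf_nonneg (hν : 0 < ν) (x : ℝ) : 0 ≤ tpdf ν x := by
  have := tpdfConst_pos hν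
  rw [tpdf_eq]
  positivity

lemma continuous_one_add_sq_div_rpow (hν : 0 < ν) (q : ℝ) :
    Continuous fun x : ℝ => (1 + x ^ 2 / ν) ^ q :=
  (by fun_prop : Continuous fun x : ℝ => 1 + x ^ 2 / ν).rpow_const fun x => Or.inl (by positivity)

lemma continuous_tpdf (hν : 0 < ν) : Continuous (tpdf ν) :=
  continuous_const.mul (continuous_one_add_sq_div_rpow hν _)

lemma integrable_one_add_sq_div_rpow (hν : 1 < ν) :
    Integrable fun x : ℝ => (1 + x ^ 2 / ν) ^ (-((ν + 1) / 2)) := by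
  have hν0 : 0 < ν := by linarith
  have hmaj : Integrable (fun x : ℝ => (1 + ‖x‖ ^ 2) ^ (-(ν + 1) / 2)) :=
    integrable_rpow_neg_one_add_norm_sq (by simp; linarith)
  refine (hmaj.const_mul (ν ^ ((ν + 1) / 2))).mono'
    (continuous_one_add_sq_div_rpow hν0 _).aestronglyMeasurable
    (Filter.Eventually.of_forall fun x => ?_)
  have hle : (1 + x ^ 2) / ν ≤ 1 + x ^ 2 / ν := by
    rw [add_div]
    have : 1 / ν ≤ 1 := by rw [div_le_one hν0]; linarith
    linarith
  rw [norm_of_nonneg (by positivity)]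
  calc (1 + x ^ 2 / ν) ^ (-((ν + 1) / 2)) ≤ ((1 + x ^ 2) / ν) ^ (-((ν + 1) / 2)) :=
        rpow_le_rpow_of_nonpos (by positivity) hle (by linarith)
    _ = ν ^ ((ν + 1) / 2) * (1 + ‖x‖ ^ 2) ^ (-(ν + 1) / 2) := by
        rw [div_rpow (by positivity) hν0.le, rpow_neg hν0.le, norm_eq_abs, sq_abs,
          div_eq_mul_inv, mul_comm, neg_div, inv_inv]

lemma integrable_tpdf (hν : 1 < ν) : Integrable (tpdf ν) :=
  (integrable_one_add_sq_div_rpow hν).const_mul _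

lemma hasDerivAt_tcdf (hν : 1 < ν) (x : ℝ) : HasDerivAt (tcdf ν) (tpdf ν x) x := by
  have hint := integrable_tpdf hν
  have hcont := continuous_tpdf (show 0 < ν by linarith)
  have hsplit : (fun y => (∫ t in (0 : ℝ)..y, tpdf ν t) + tcdf ν 0) = tcdf ν := by
    funext y
    rw [← intervalIntegral.integral_Iic_sub_Iic hint.integrableOn hint.integrableOn]
    simp only [tcdf, sub_add_cancel]
  rw [← hsplit]
  exact (intervalIntegral.integral_hasDerivAt_right hint.intervalIntegrable
    hcont.stronglyMeasurable.stronglyMeasurableAtFilter hcont.continuousAt).add_const _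

lemma tcdf_nonneg (hν : 0 < ν) (x : ℝ) : 0 ≤ tcdf ν x :=
  setIntegral_nonneg measurableSet_Iic fun t _ => tpdf_nonneg hν t

lemma sqrt_mul_tpdfConst_sub_two (hν : 2 < ν) :
    √(ν / (ν - 2)) * tpdfConst (ν - 2) = ν / (ν - 1) * tpdfConst ν := by
  have hν0 : 0 < ν := by linarith
  have hν2 : 0 < ν - 2 := by linarith
  have hν1 : ν - 1 ≠ 0 := by linarith
  rw [tpdfConst, tpdfConst, show (ν + 1) / 2 = (ν - 1) / 2 + 1 by ring,
    show ν / 2 = (ν - 2) / 2 + 1 by ring, show (ν - 2 + 1) / 2 = (ν - 1) / 2 by ring,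
    Gamma_add_one (by linarith : (ν - 1) / 2 ≠ 0), Gamma_add_one (by linarith : (ν - 2) / 2 ≠ 0),
    sqrt_div hν0.le, sqrt_mul hν2.le, sqrt_mul hν0.le]
  field_simp
  rw [sq_sqrt hν0.le, sq_sqrt hν2.le]

lemma sqrt_mul_tpdf_sub_two (hν : 2 < ν) (x : ℝ) :
    √(ν / (ν - 2)) * tpdf (ν - 2) (x / √(ν / (ν - 2))) =
      ν / (ν - 1) * tpdfConst ν * (1 + x ^ 2 / ν) ^ (-((ν - 1) / 2)) := by
  have hν2 : 0 < ν - 2 := by linarith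
  have harg : (x / √(ν / (ν - 2))) ^ 2 / (ν - 2) = x ^ 2 / ν := by
    rw [div_pow, sq_sqrt (by positivity)]
    field_simp
  rw [tpdf_eq, harg, show -((ν - 2 + 1) / 2) = -((ν - 1) / 2) by ring, ← mul_assoc,
    sqrt_mul_tpdfConst_sub_two hν]

lemma hasDerivAt_one_add_sq_div_rpow (hν : 0 < ν) (q x : ℝ) :
    HasDerivAt (fun y : ℝ => (1 + y ^ 2 / ν) ^ q)
      (2 * x / ν * q * (1 + x ^ 2 / ν) ^ (q - 1)) x := by
  have hinner : HasDerivAt (fun y : ℝ => 1 + y ^ 2 / ν) (2 * x / ν) x := by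
    simpa using ((hasDerivAt_pow 2 x).div_const ν).const_add 1
  exact hinner.rpow_const (Or.inl (by positivity))

lemma hasDerivAt_sqrt_mul_tpdf_sub_two (hν : 2 < ν) (x : ℝ) :
    HasDerivAt (fun y => √(ν / (ν - 2)) * tpdf (ν - 2) (y / √(ν / (ν - 2))))
      (-(x * tpdf ν x)) x := by
  have hν1 : ν - 1 ≠ 0 := by linarith
  simp_rw [sqrt_mul_tpdf_sub_two hν]
  refine ((hasDerivAt_one_add_sq_div_rpow (by linarith) _ x).const_mul
    (ν / (ν - 1) * tpdfConst ν)).congr_deriv ?_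
  rw [tpdf_eq, show -((ν - 1) / 2) - 1 = -((ν + 1) / 2) by ring]
  field_simp

end

/-- For `ν > 2` and `m = √(ν/(ν−2))`, the map `x ↦ m·φ_{ν−2}(x/m)`
has derivative `−x·φ_ν(x)` at every `x`; consequently `τ_ν` is differentiable with
`τ_ν′(x) = Φ_ν(x)`, and in particular `τ_ν` is nondecreasing. -/
theorem tau_deriv (ν : ℝ) (hν : 2 < ν) (m : ℝ) (hm : m = Real.sqrt (ν / (ν - 2))) :
    (∀ x : ℝ, HasDerivAt (fun x : ℝ => m * tpdf (ν - 2) (x / m))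
      (-(x * tpdf ν x)) x) ∧
    (∀ x : ℝ, HasDerivAt (fun x : ℝ => tau ν x) (tcdf ν x) x) ∧
    Monotone (tau ν) := by
  subst hm
  have hderiv (x : ℝ) : HasDerivAt (tau ν) (tcdf ν x) x := by
    refine (((hasDerivAt_id' x).mul (hasDerivAt_tcdf (by linarith) x)).add
      (hasDerivAt_sqrt_mul_tpdf_sub_two hν x)).congr_deriv ?_
    ring
  refine ⟨hasDerivAt_sqrt_mul_tpdf_sub_two hν, hderiv, ?_⟩
  refine monotone_of_deriv_nonneg (fun x => (hderiv x).differentiableAt) fun x => ?_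
  rw [(hderiv x).deriv]
  exact tcdf_nonneg (by linarith) x
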